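/- Let $t \geq 2$ and let $\gamma_1, \ldots, \gamma_t$ be elements of $\mathrm{GL}(V)$ for a finite-dimensional real normed vector space $V$, generating a group $\Gamma$ that is $\varepsilon$-Schottky on $\mathbb{P}(V)$: with $E = \{\gamma_1^{\pm 1}, \ldots, \gamma_t^{\pm 1}\}$, every $h \in E$ is $\varepsilon$-proximal, and for all $h, h' \in E$ with $h' \neq h^{-1}$, $\delta(x_h^+, X_{h'}^<) \geq 6\varepsilon$. Then $\Gamma$ is a free group on the generators $\gamma_1, \ldots, \gamma_t$ and is discrete in $\mathrm{GL}(V)$. -/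

import Mathlib

open Filter Topology

variable {V : Type*} [NormedAddCommGroup V] [NormedSpace ℝ V]

/-- The distance between two lines (points of `ℙ(V)`), viewed as submodules:
`d(x₁, x₂) = inf {‖v₁ - v₂‖ : vᵢ ∈ xᵢ, ‖vᵢ‖ = 1}`. -/
noncomputable def projDist (x₁ x₂ : Submodule ℝ V) : ℝ :=
  sInf {r : ℝ | ∃ v₁ ∈ x₁, ∃ v₂ ∈ x₂, ‖v₁‖ = 1 ∧ ‖v₂‖ = 1 ∧ r = ‖v₁ - v₂‖}

/-- The distance `δ(x, ℙ(W))` from a line `x` to the projectivization of a subspace `W`. -/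
noncomputable def projDelta (x W : Submodule ℝ V) : ℝ :=
  sInf {r : ℝ | ∃ y : Submodule ℝ V, y ≤ W ∧ Module.finrank ℝ y = 1 ∧ r = projDist x y}

/-- The spectral radius of an endomorphism, via Gelfand's formula; in finite dimension
this is the maximal modulus `λ₁(g)` of the complex eigenvalues of `g`. -/
noncomputable def specRad (g : V →L[ℝ] V) : ℝ :=
  Filter.limsup (fun n : ℕ => ‖g ^ n‖ ^ ((1 : ℝ) / n)) Filter.atTop

/-- `g` is proximal with top (real) eigenvalue `α`, attracting eigenvector `v`, and
invariant complementary hyperplane `W` on which the spectral radius is `< |α|`; this says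
exactly that `α` is the unique eigenvalue of maximal modulus and has multiplicity one. -/
def IsProximalWith (g : V →L[ℝ] V) (α : ℝ) (v : V) (W : Submodule ℝ V) : Prop :=
  v ≠ 0 ∧ g v = α • v ∧ IsCompl (Submodule.span ℝ {v}) W ∧
  ∃ gW : W →L[ℝ] W, (∀ w : W, g (w : V) = (gW w : V)) ∧ specRad gW < |α|

/-- `g` is `ε`-proximal with data `(α, v, W)`: it is proximal, `δ(x_g⁺, X_g^<) ≥ 2ε`,
`g` maps `B_g^ε` into `b_g^ε`, and `g` is `ε`-Lipschitz on `B_g^ε` (in `ℙ(V)`). -/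
def IsEpsProximalWith (g : V →L[ℝ] V) (ε α : ℝ) (v : V) (W : Submodule ℝ V) : Prop :=
  IsProximalWith g α v W ∧ 2 * ε ≤ projDelta (Submodule.span ℝ {v}) W ∧
  (∀ x : Submodule ℝ V, Module.finrank ℝ x = 1 → ε ≤ projDelta x W →
    Submodule.map (g : V →ₗ[ℝ] V) x ≠ ⊥ ∧
      projDist (Submodule.map (g : V →ₗ[ℝ] V) x) (Submodule.span ℝ {v}) ≤ ε) ∧
  (∀ x y : Submodule ℝ V, Module.finrank ℝ x = 1 → Module.finrank ℝ y = 1 →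
    ε ≤ projDelta x W → ε ≤ projDelta y W →
    projDist (Submodule.map (g : V →ₗ[ℝ] V) x) (Submodule.map (g : V →ₗ[ℝ] V) y) ≤
      ε * projDist x y)

/-- `g` is `ε`-proximal. -/
def IsEpsProximal (g : V →L[ℝ] V) (ε : ℝ) : Prop :=
  ∃ α v W, IsEpsProximalWith g ε α v W

/-!
Each letter `h ∈ {γᵢ^{±1}}` maps `B_h^ε` into `b_h^ε` and is `ε`-Lipschitz there, and the
`6ε`-separation puts `b_h^ε` inside `B_{h'}^ε` whenever `h' ≠ h⁻¹`. By ping-pong, a nonempty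
reduced word `P` with last letter `ℓ` is `ε`-Lipschitz on `B_ℓ^ε`. For an index `j` different from
that of `ℓ`, the attracting lines of `γⱼ` and `γⱼ⁻¹` both lie in `B_ℓ^ε`, and they are `2ε` apart
because the attracting line of `γⱼ⁻¹` lies in the repelling hyperplane of `γⱼ`: a component along
the attracting line of `γⱼ` would force `λ₁(γⱼ) λ₁(γⱼ⁻¹) = 1`, which comparing growth rates on the
repelling hyperplane of `γⱼ⁻¹` rules out. Hence `P` moves one of them by `ε(1 - ε)`, which
forces `‖P - 1‖ ≥ ε(1 - ε)/2`. This uniform gap gives both freeness and discreteness.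
-/

namespace ContinuousLinearMap

variable {R M : Type*} [Semiring R] [TopologicalSpace M] [AddCommMonoid M] [Module R M]

@[simp]
lemma units_apply_inv_apply (u : (M →L[R] M)ˣ) (x : M) :
    (u : M →L[R] M) ((↑u⁻¹ : M →L[R] M) x) = x := by
  rw [← mul_apply_eq_comp, u.mul_inv, one_apply_eq_self]

end ContinuousLinearMap

open Submodule

section ProjectiveDistance

variable {x y z : Submodule ℝ V}

lemma projDist_nonneg (x y : Submodule ℝ V) : 0 ≤ projDist x y :=
  Real.sInf_nonneg <| by rintro r ⟨v₁, -, v₂, -, -, -, rfl⟩; positivity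

lemma projDist_le_norm_sub {v₁ v₂ : V} (h₁ : v₁ ∈ x) (h₂ : v₂ ∈ y) (n₁ : ‖v₁‖ = 1)
    (n₂ : ‖v₂‖ = 1) : projDist x y ≤ ‖v₁ - v₂‖ :=
  csInf_le ⟨0, by rintro r ⟨v₁, -, v₂, -, -, -, rfl⟩; positivity⟩ ⟨v₁, h₁, v₂, h₂, n₁, n₂, rfl⟩

lemma projDist_comm (x y : Submodule ℝ V) : projDist x y = projDist y x := by
  unfold projDist
  congr 1
  ext r
  constructor <;>
  · rintro ⟨v₁, h₁, v₂, h₂, n₁, n₂, rfl⟩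
    exact ⟨v₂, h₂, v₁, h₁, n₂, n₁, norm_sub_rev _ _⟩

lemma exists_mem_norm_eq_one (hx : Module.finrank ℝ x = 1) : ∃ u ∈ x, ‖u‖ = 1 := by
  have hx0 : x ≠ ⊥ := by rintro rfl; simp at hx
  obtain ⟨w, hw, hw0⟩ := Submodule.exists_mem_ne_zero_of_ne_bot hx0
  exact ⟨‖w‖⁻¹ • w, x.smul_mem _ hw, norm_smul_inv_norm hw0⟩

lemma projDist_le_two (hx : Module.finrank ℝ x = 1) (hy : Module.finrank ℝ y = 1) :
    projDist x y ≤ 2 := by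
  obtain ⟨u, hu, nu⟩ := exists_mem_norm_eq_one hx
  obtain ⟨w, hw, nw⟩ := exists_mem_norm_eq_one hy
  calc projDist x y ≤ ‖u - w‖ := projDist_le_norm_sub hu hw nu nw
    _ ≤ ‖u‖ + ‖w‖ := norm_sub_le _ _
    _ = 2 := by rw [nu, nw]; norm_num

lemma eq_or_eq_neg_of_norm_eq_one (hz : Module.finrank ℝ z = 1) {q q' : V} (hq : q ∈ z)
    (hq' : q' ∈ z) (nq : ‖q‖ = 1) (nq' : ‖q'‖ = 1) : q' = q ∨ q' = -q := by
  have hq0 : (⟨q, hq⟩ : z) ≠ 0 := by simp [← norm_ne_zero_iff, nq]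
  obtain ⟨c, hc⟩ := (finrank_eq_one_iff_of_nonzero' _ hq0).mp hz ⟨q', hq'⟩
  replace hc : c • q = q' := congrArg Subtype.val hc
  have : |c| = 1 := by rwa [← hc, norm_smul, nq, mul_one] at nq'
  rcases abs_eq zero_le_one |>.mp this with rfl | rfl <;> simp [← hc]

lemma projDist_triangle (hx : Module.finrank ℝ x = 1) (hz : Module.finrank ℝ z = 1)
    (hy : Module.finrank ℝ y = 1) : projDist x y ≤ projDist x z + projDist z y := by
  obtain ⟨p₀, hp₀, np₀⟩ := exists_mem_norm_eq_one hx
  obtain ⟨q₀, hq₀, nq₀⟩ := exists_mem_norm_eq_one hz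
  obtain ⟨s₀, hs₀, ns₀⟩ := exists_mem_norm_eq_one hy
  rw [← sub_le_iff_le_add]
  refine le_csInf ⟨_, p₀, hp₀, q₀, hq₀, np₀, nq₀, rfl⟩ ?_
  rintro _ ⟨p, hp, q, hq, np, nq, rfl⟩
  rw [sub_le_comm]
  refine le_csInf ⟨_, q₀, hq₀, s₀, hs₀, nq₀, ns₀, rfl⟩ ?_
  rintro _ ⟨q', hq', s, hs, nq', ns, rfl⟩
  rw [sub_le_iff_le_add, add_comm]
  -- `q'` is `±q`; in the second case compare `p` with `-s` instead of `s`
  rcases eq_or_eq_neg_of_norm_eq_one hz hq hq' nq nq' with rfl | rfl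
  · exact (projDist_le_norm_sub hp hs np ns).trans (norm_sub_le_norm_sub_add_norm_sub _ _ _)
  · calc projDist x y ≤ ‖p - -s‖ :=
          projDist_le_norm_sub hp (y.neg_mem hs) np (by rwa [norm_neg])
      _ ≤ ‖p - q‖ + ‖q - -s‖ := norm_sub_le_norm_sub_add_norm_sub _ _ _
      _ = ‖p - q‖ + ‖-q - s‖ := by rw [← norm_neg (q - -s)]; congr 2; abel

lemma projDelta_le_projDist {W : Submodule ℝ V} (hyW : y ≤ W) (hy : Module.finrank ℝ y = 1) :
    projDelta x W ≤ projDist x y :=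
  csInf_le ⟨0, by rintro r ⟨y, -, -, rfl⟩; exact projDist_nonneg x y⟩ ⟨y, hyW, hy, rfl⟩

lemma projDelta_bot (x : Submodule ℝ V) : projDelta x ⊥ = 0 := by
  unfold projDelta
  convert Real.sInf_empty using 2
  refine Set.eq_empty_of_forall_notMem ?_
  rintro r ⟨y, hy, hy1, -⟩
  obtain rfl := le_bot_iff.mp hy
  simp at hy1

lemma exists_line_le {W : Submodule ℝ V} (hW : W ≠ ⊥) :
    ∃ y ≤ W, Module.finrank ℝ y = 1 := by
  obtain ⟨w, hw, hw0⟩ := Submodule.exists_mem_ne_zero_of_ne_bot hW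
  exact ⟨ℝ ∙ w, (span_singleton_le_iff_mem w W).mpr hw, finrank_span_singleton hw0⟩

lemma projDelta_le_projDist_add {W : Submodule ℝ V} (hW : W ≠ ⊥)
    (hx : Module.finrank ℝ x = 1) (hz : Module.finrank ℝ z = 1) :
    projDelta x W ≤ projDist x z + projDelta z W := by
  obtain ⟨y₀, hy₀, hy₀1⟩ := exists_line_le hW
  rw [← sub_le_iff_le_add']
  refine le_csInf ⟨_, y₀, hy₀, hy₀1, rfl⟩ ?_
  rintro _ ⟨y, hy, hy1, rfl⟩
  linarith [projDelta_le_projDist (x := x) hy hy1, projDist_triangle hx hz hy1]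

lemma projDist_map_self_le {P : V →L[ℝ] V} (hP : ‖P - 1‖ < 1) (hx : Module.finrank ℝ x = 1) :
    projDist (x.map (P : V →ₗ[ℝ] V)) x ≤ 2 * ‖P - 1‖ := by
  obtain ⟨u, hu, nu⟩ := exists_mem_norm_eq_one hx
  have hPu : ‖P u - u‖ ≤ ‖P - 1‖ := by simpa [nu] using (P - 1).le_opNorm u
  have hnorm : |‖P u‖ - 1| ≤ ‖P - 1‖ := nu ▸ (abs_norm_sub_norm_le (P u) u).trans hPu
  have hPu0 : P u ≠ 0 := by
    rintro h
    rw [h, norm_zero, zero_sub, abs_neg, abs_one] at hnorm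
    linarith
  have hPu' : ‖‖P u‖⁻¹ • P u - P u‖ = |1 - ‖P u‖| := by
    calc ‖‖P u‖⁻¹ • P u - P u‖ = |(‖P u‖⁻¹ - 1) * ‖P u‖| := by
          rw [abs_mul, abs_norm, ← Real.norm_eq_abs, ← norm_smul, sub_smul, one_smul]
      _ = |1 - ‖P u‖| := by rw [sub_mul, inv_mul_cancel₀ (norm_ne_zero_iff.mpr hPu0), one_mul]
  calc projDist (x.map (P : V →ₗ[ℝ] V)) x ≤ ‖‖P u‖⁻¹ • P u - u‖ :=
        projDist_le_norm_sub (smul_mem _ _ (mem_map_of_mem hu)) hu (norm_smul_inv_norm hPu0) nu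
    _ ≤ ‖‖P u‖⁻¹ • P u - P u‖ + ‖P u - u‖ := norm_sub_le_norm_sub_add_norm_sub _ _ _
    _ ≤ ‖P - 1‖ + ‖P - 1‖ := by rw [hPu', abs_sub_comm]; exact add_le_add hnorm hPu
    _ = 2 * ‖P - 1‖ := by ring

end ProjectiveDistance

section SpectralRadius

variable {E : Type*} [NormedAddCommGroup E] [NormedSpace ℝ E]

lemma isBoundedUnder_norm_pow_rpow (B : E →L[ℝ] E) :
    IsBoundedUnder (· ≤ ·) atTop (fun n : ℕ => ‖B ^ n‖ ^ ((1 : ℝ) / n)) := by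
  refine isBoundedUnder_of_eventually_le (a := ‖B‖) ?_
  filter_upwards [eventually_ne_atTop 0] with n hn
  calc ‖B ^ n‖ ^ ((1 : ℝ) / n) ≤ (‖B‖ ^ n) ^ ((n : ℝ)⁻¹) := by
        rw [one_div]; gcongr; exact norm_pow_le' B (Nat.pos_of_ne_zero hn)
    _ = ‖B‖ := Real.pow_rpow_inv_natCast (norm_nonneg B) hn

lemma specRad_nonneg (B : E →L[ℝ] E) : 0 ≤ specRad B :=
  le_limsup_of_frequently_le (Frequently.of_forall fun _ => by positivity)
    (isBoundedUnder_norm_pow_rpow B)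

lemma eventually_norm_pow_le_of_specRad_lt {B : E →L[ℝ] E} {M : ℝ} (h : specRad B < M) :
    ∀ᶠ n : ℕ in atTop, ‖B ^ n‖ ≤ M ^ n := by
  filter_upwards [eventually_lt_of_limsup_lt h (isBoundedUnder_norm_pow_rpow B),
    eventually_ne_atTop 0] with n hlt hn
  calc ‖B ^ n‖ = (‖B ^ n‖ ^ ((n : ℝ)⁻¹)) ^ n :=
        (Real.rpow_inv_natCast_pow (norm_nonneg _) hn).symm
    _ ≤ M ^ n := by rw [← one_div]; gcongr

end SpectralRadius

lemma pow_apply_of_eq_smul {g : V →L[ℝ] V} {a : ℝ} {v : V} (hgv : g v = a • v) (n : ℕ) :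
    (g ^ n) v = a ^ n • v := by
  induction n with
  | zero => simp
  | succ n ih => rw [pow_succ', mul_apply_eq_comp, ih, map_smul, hgv, smul_smul, pow_succ]

lemma pow_apply_of_restrict {g : V →L[ℝ] V} {W : Submodule ℝ V} {A : W →L[ℝ] W}
    (hA : ∀ w : W, g w = A w) (n : ℕ) (w : W) : (g ^ n) w = ((A ^ n) w : V) := by
  induction n with
  | zero => simp
  | succ n ih => rw [pow_succ', mul_apply_eq_comp, ih, hA, pow_succ', mul_apply_eq_comp]

lemma mapsTo_of_mapsTo_inv [FiniteDimensional ℝ V] {u : (V →L[ℝ] V)ˣ} {W : Submodule ℝ V}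
    (h : Set.MapsTo (↑u⁻¹ : V →L[ℝ] V) W W) : Set.MapsTo (u : V →L[ℝ] V) W W := by
  intro x hx
  have hinj : Function.Injective ((↑u⁻¹ : V →L[ℝ] V).restrict h) := fun y z hyz => by
    have : (↑u⁻¹ : V →L[ℝ] V) y = (↑u⁻¹ : V →L[ℝ] V) z := congrArg Subtype.val hyz
    simpa using congrArg (u : V →L[ℝ] V) this
  obtain ⟨e, he⟩ := LinearMap.injective_iff_surjective.mp hinj ⟨x, hx⟩
  have : x = (↑u⁻¹ : V →L[ℝ] V) e := congrArg Subtype.val he.symm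
  simp [this]

namespace IsProximalWith

variable {g : V →L[ℝ] V} {α : ℝ} {v : V} {W : Submodule ℝ V}

lemma exists_add_of_isCompl (hg : IsProximalWith g α v W) (u : V) :
    ∃ s : ℝ, ∃ w ∈ W, u = s • v + w := by
  obtain ⟨y, hy, w, hw, rfl⟩ :=
    Submodule.mem_sup.mp (hg.2.2.1.codisjoint.eq_top ▸ mem_top (x := u))
  obtain ⟨s, rfl⟩ := mem_span_singleton.mp hy
  exact ⟨s, w, hw, rfl⟩

lemma exists_eventually_norm_pow_apply_le (hg : IsProximalWith g α v W) (u : V) :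
    ∃ K, ∀ᶠ n : ℕ in atTop, ‖(g ^ n) u‖ ≤ K * |α| ^ n := by
  obtain ⟨s, w, hw, rfl⟩ := hg.exists_add_of_isCompl u
  obtain ⟨-, hgv, -, A, hA, hspec⟩ := hg
  refine ⟨|s| * ‖v‖ + ‖w‖, ?_⟩
  filter_upwards [eventually_norm_pow_le_of_specRad_lt hspec] with n hn
  have hAw : ‖((A ^ n) ⟨w, hw⟩ : V)‖ ≤ |α| ^ n * ‖w‖ :=
    ((A ^ n).le_opNorm _).trans (mul_le_mul_of_nonneg_right hn (norm_nonneg _))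
  rw [map_add, map_smul, pow_apply_of_eq_smul hgv, pow_apply_of_restrict hA n ⟨w, hw⟩]
  calc ‖s • α ^ n • v + ((A ^ n) ⟨w, hw⟩ : V)‖ ≤ |s| * (|α| ^ n * ‖v‖) + |α| ^ n * ‖w‖ := by
        refine (norm_add_le _ _).trans (add_le_add ?_ hAw)
        simp [norm_smul]
    _ = (|s| * ‖v‖ + ‖w‖) * |α| ^ n := by ring

section Inverse

variable [FiniteDimensional ℝ V] {u : (V →L[ℝ] V)ˣ} {α' : ℝ} {v' : V} {W' : Submodule ℝ V}

lemma one_lt_abs_mul_abs_of_inv (hg : IsProximalWith u α v W)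
    (hg' : IsProximalWith ↑u⁻¹ α' v' W') (hW' : W' ≠ ⊥) : 1 < |α| * |α'| := by
  by_contra! hle
  obtain ⟨-, -, -, A', hA', hspec'⟩ := hg'
  obtain ⟨r, hr, hrα'⟩ := exists_between hspec'
  have hr0 : 0 ≤ r := (specRad_nonneg A').trans hr.le
  have hrα : r * |α| < 1 := by
    rcases (abs_nonneg α).eq_or_lt with h0 | h0
    · simp [← h0]
    · nlinarith
  have hmaps : Set.MapsTo (u : V →L[ℝ] V) W' W' :=
    mapsTo_of_mapsTo_inv fun w hw => hA' ⟨w, hw⟩ ▸ (A' ⟨w, hw⟩).2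
  obtain ⟨w, hw, hw0⟩ := Submodule.exists_mem_ne_zero_of_ne_bot hW'
  obtain ⟨K, hK⟩ := hg.exists_eventually_norm_pow_apply_le w
  -- `uⁿ w` stays in `W'`, so `‖w‖ = ‖(u⁻¹)ⁿ (uⁿ w)‖ ≤ rⁿ ‖uⁿ w‖ = O((r |α|)ⁿ)`
  have hbound : ∀ᶠ n : ℕ in atTop, ‖w‖ ≤ K * (r * |α|) ^ n := by
    filter_upwards [hK, eventually_norm_pow_le_of_specRad_lt hr] with n hKn hA'n
    have hwn : ((u : V →L[ℝ] V) ^ n) w ∈ W' := by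
      rw [FunLike.coe_pow_eq_iterate]; exact hmaps.iterate n hw
    have hw_eq : w = ((A' ^ n) ⟨_, hwn⟩ : V) := by
      rw [← pow_apply_of_restrict hA', ← mul_apply_eq_comp, ← Units.val_pow_eq_pow_val,
        ← Units.val_pow_eq_pow_val, ← Units.val_mul, inv_pow, inv_mul_cancel, Units.val_one,
        one_apply_eq_self]
    calc ‖w‖ = ‖(A' ^ n) ⟨_, hwn⟩‖ := by nth_rw 1 [hw_eq]; rfl
      _ ≤ ‖A' ^ n‖ * ‖((u : V →L[ℝ] V) ^ n) w‖ := (A' ^ n).le_opNorm _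
      _ ≤ r ^ n * (K * |α| ^ n) := by gcongr
      _ = K * (r * |α|) ^ n := by ring
  have hlim : Tendsto (fun n : ℕ => K * (r * |α|) ^ n) atTop (𝓝 0) := by
    simpa using (tendsto_pow_atTop_nhds_zero_of_lt_one (by positivity) hrα).const_mul K
  exact hw0 (norm_le_zero_iff.mp (ge_of_tendsto hlim hbound))

lemma mem_of_inv (hg : IsProximalWith u α v W) (hg' : IsProximalWith ↑u⁻¹ α' v' W')
    (hW' : W' ≠ ⊥) : v' ∈ W := by
  have hαα' : α' * α ≠ 1 := fun h => by
    have := hg.one_lt_abs_mul_abs_of_inv hg' hW'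
    rw [← abs_mul, mul_comm, h, abs_one] at this
    exact this.false
  obtain ⟨s, w, hw, rfl⟩ := hg.exists_add_of_isCompl v'
  obtain ⟨hv0, hgv, hcompl, A, hA, -⟩ := hg
  have huw : (u : V →L[ℝ] V) w ∈ W := hA ⟨w, hw⟩ ▸ (A ⟨w, hw⟩).2
  -- the `v`-component of `v' = α' • u v'` is `s = α' α s`
  have hcomp : (s * (α' * α - 1)) • v = w - α' • (u : V →L[ℝ] V) w := by
    have h := congrArg (u : V →L[ℝ] V) hg'.2.1
    rw [ContinuousLinearMap.units_apply_inv_apply, map_smul, map_add, map_smul, hgv] at h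
    linear_combination (norm := module) -h
  have hzero := Submodule.disjoint_def.mp hcompl.disjoint _
    (smul_mem _ _ (mem_span_singleton_self v)) (hcomp ▸ W.sub_mem hw (W.smul_mem α' huw))
  obtain rfl : s = 0 := by simpa [hv0, sub_eq_zero, hαα'] using hzero
  simpa using hw

end Inverse

end IsProximalWith

open scoped Pointwise

lemma finrank_units_smul (u : (V →L[ℝ] V)ˣ) (x : Submodule ℝ V) :
    Module.finrank ℝ ↥(u • x) = Module.finrank ℝ x :=
  LinearEquiv.finrank_map_eq (ContinuousLinearEquiv.unitsEquiv ℝ V u).toLinearEquiv x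

/-- `b_g^ε` for `g` with attracting line `ℝ ∙ v`. -/
def attractingNbhd (v : V) (ε : ℝ) : Set (Submodule ℝ V) :=
  {x | Module.finrank ℝ x = 1 ∧ projDist x (ℝ ∙ v) ≤ ε}

/-- `B_g^ε` for `g` with repelling hyperplane `W`. -/
def awayFrom (W : Submodule ℝ V) (ε : ℝ) : Set (Submodule ℝ V) :=
  {x | Module.finrank ℝ x = 1 ∧ ε ≤ projDelta x W}

def FreeGroup.letter {ι G : Type*} [Group G] (γ : ι → G) (p : ι × Bool) : G :=
  cond p.2 (γ p.1) (γ p.1)⁻¹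

open FreeGroup

lemma FreeGroup.IsReduced.ne_inv_of_cons_cons {ι : Type*} {a b : ι × Bool} {L : List (ι × Bool)}
    (h : IsReduced (a :: b :: L)) : a ≠ (b.1, !b.2) := by
  rintro rfl
  simp at h

structure IsSchottky {ι : Type*} (ε : ℝ) (γ : ι → (V →L[ℝ] V)ˣ) (α : ι → Bool → ℝ)
    (v : ι → Bool → V) (W : ι → Bool → Submodule ℝ V) : Prop where
  isEpsProximalWith : ∀ i b, IsEpsProximalWith
    (cond b (↑(γ i) : V →L[ℝ] V) (↑(γ i)⁻¹ : V →L[ℝ] V)) ε (α i b) (v i b) (W i b)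
  six_mul_le_projDelta : ∀ i b j c, (j, c) ≠ (i, !b) → 6 * ε ≤ projDelta (ℝ ∙ v i b) (W j c)

namespace IsSchottky

variable {ι : Type*} {ε : ℝ} {γ : ι → (V →L[ℝ] V)ˣ} {α : ι → Bool → ℝ} {v : ι → Bool → V}
  {W : ι → Bool → Submodule ℝ V}

lemma finrank_span (hS : IsSchottky ε γ α v W) (i : ι) (b : Bool) :
    Module.finrank ℝ (ℝ ∙ v i b) = 1 :=
  finrank_span_singleton (hS.isEpsProximalWith i b).1.1

lemma six_mul_le_projDelta_self (hS : IsSchottky ε γ α v W) (i : ι) (b : Bool) :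
    6 * ε ≤ projDelta (ℝ ∙ v i b) (W i b) :=
  hS.six_mul_le_projDelta i b i b (by simp)

lemma W_ne_bot (hS : IsSchottky ε γ α v W) (hε : 0 < ε) (i : ι) (b : Bool) : W i b ≠ ⊥ := by
  intro h
  have := hS.six_mul_le_projDelta_self i b
  rw [h, projDelta_bot] at this
  linarith

lemma le_one_third (hS : IsSchottky ε γ α v W) (i : ι) : ε ≤ 1 / 3 := by
  have h6 := hS.six_mul_le_projDelta_self i true
  by_cases h : W i true = ⊥
  · rw [h, projDelta_bot] at h6
    linarith
  obtain ⟨y, hy, hy1⟩ := exists_line_le h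
  linarith [projDelta_le_projDist (x := ℝ ∙ v i true) hy hy1,
    projDist_le_two (hS.finrank_span i true) hy1]

lemma two_mul_le_projDist [FiniteDimensional ℝ V] (hS : IsSchottky ε γ α v W) (hε : 0 < ε)
    (i : ι) : 2 * ε ≤ projDist (ℝ ∙ v i true) (ℝ ∙ v i false) := by
  have hv : v i false ∈ W i true := IsProximalWith.mem_of_inv (u := γ i)
    (hS.isEpsProximalWith i true).1 (hS.isEpsProximalWith i false).1 (hS.W_ne_bot hε i false)
  exact (hS.isEpsProximalWith i true).2.1.trans <|
    projDelta_le_projDist ((span_singleton_le_iff_mem _ _).mpr hv) (hS.finrank_span i false)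

lemma mapsTo_letter_smul (hS : IsSchottky ε γ α v W) (i : ι) (b : Bool) :
    Set.MapsTo (letter γ (i, b) • ·) (awayFrom (W i b) ε) (attractingNbhd (v i b) ε) := by
  rintro x ⟨hx, hδ⟩
  refine ⟨(finrank_units_smul _ x).trans hx, ?_⟩
  cases b
  exacts [((hS.isEpsProximalWith i false).2.2.1 x hx hδ).2,
    ((hS.isEpsProximalWith i true).2.2.1 x hx hδ).2]

lemma projDist_letter_smul_le (hS : IsSchottky ε γ α v W) (i : ι) (b : Bool)
    {x y : Submodule ℝ V} (hx : x ∈ awayFrom (W i b) ε) (hy : y ∈ awayFrom (W i b) ε) :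
    projDist (letter γ (i, b) • x) (letter γ (i, b) • y) ≤ ε * projDist x y := by
  cases b
  exacts [(hS.isEpsProximalWith i false).2.2.2 x y hx.1 hy.1 hx.2 hy.2,
    (hS.isEpsProximalWith i true).2.2.2 x y hx.1 hy.1 hx.2 hy.2]

lemma attractingNbhd_subset_awayFrom (hS : IsSchottky ε γ α v W) (hε : 0 < ε) {i j : ι}
    {b c : Bool} (hji : (j, c) ≠ (i, !b)) : attractingNbhd (v i b) ε ⊆ awayFrom (W j c) ε := by
  rintro x ⟨hx, hdx⟩
  refine ⟨hx, ?_⟩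
  have := projDelta_le_projDist_add (hS.W_ne_bot hε j c) (hS.finrank_span i b) hx
  linarith [hS.six_mul_le_projDelta i b j c hji, projDist_comm x (ℝ ∙ v i b)]

lemma mapsTo_prod_smul (hS : IsSchottky ε γ α v W) (hε : 0 < ε) :
    ∀ (L : List (ι × Bool)) (a : ι × Bool), IsReduced (a :: L) →
      Set.MapsTo (((a :: L).map (letter γ)).prod • ·)
        (awayFrom (W (L.getLastD a).1 (L.getLastD a).2) ε) (attractingNbhd (v a.1 a.2) ε)
  | [], (i, b), _ => by simpa using hS.mapsTo_letter_smul i b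
  | (j, c) :: L, (i, b), hred => by
    intro x hx
    rw [List.getLastD_cons] at hx
    dsimp only
    rw [List.map_cons, List.prod_cons, mul_smul]
    exact hS.mapsTo_letter_smul i b <|
      hS.attractingNbhd_subset_awayFrom hε hred.ne_inv_of_cons_cons <|
      mapsTo_prod_smul hS hε L (j, c) (isReduced_cons_cons.mp hred).2 hx

lemma projDist_prod_smul_le (hS : IsSchottky ε γ α v W) (hε : 0 < ε) :
    ∀ (L : List (ι × Bool)) (a : ι × Bool), IsReduced (a :: L) → ∀ {x y : Submodule ℝ V},
      x ∈ awayFrom (W (L.getLastD a).1 (L.getLastD a).2) ε →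
      y ∈ awayFrom (W (L.getLastD a).1 (L.getLastD a).2) ε →
      projDist (((a :: L).map (letter γ)).prod • x) (((a :: L).map (letter γ)).prod • y) ≤
        ε * projDist x y
  | [], (i, b), _, _, _, hx, hy => by simpa using hS.projDist_letter_smul_le i b hx hy
  | (j, c) :: L, (i, b), hred, x, y, hx, hy => by
    have htail := (isReduced_cons_cons.mp hred).2
    have hsub := hS.attractingNbhd_subset_awayFrom hε hred.ne_inv_of_cons_cons
    rw [List.getLastD_cons] at hx hy
    set Q := (((j, c) :: L).map (letter γ)).prod
    rw [List.map_cons, List.prod_cons, mul_smul, mul_smul]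
    calc projDist (letter γ (i, b) • Q • x) (letter γ (i, b) • Q • y)
        ≤ ε * projDist (Q • x) (Q • y) := hS.projDist_letter_smul_le i b
          (hsub (hS.mapsTo_prod_smul hε L (j, c) htail hx))
          (hsub (hS.mapsTo_prod_smul hε L (j, c) htail hy))
      _ ≤ ε * (ε * projDist x y) :=
          mul_le_mul_of_nonneg_left (projDist_prod_smul_le hS hε L (j, c) htail hx hy) hε.le
      _ ≤ ε * projDist x y := by
          gcongr
          exact mul_le_of_le_one_left (projDist_nonneg x y) (by linarith [hS.le_one_third i])

lemma exists_le_projDist_prod_smul [FiniteDimensional ℝ V] [Nontrivial ι]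
    (hS : IsSchottky ε γ α v W) (hε : 0 < ε) {a : ι × Bool} {L : List (ι × Bool)}
    (hred : IsReduced (a :: L)) :
    ∃ x : Submodule ℝ V, Module.finrank ℝ x = 1 ∧
      ε * (1 - ε) ≤ projDist (((a :: L).map (letter γ)).prod • x) x := by
  set P := ((a :: L).map (letter γ)).prod
  obtain ⟨j, hj⟩ := exists_ne (L.getLastD a).1
  -- as `j` is not the index of the last letter, both attracting lines of `γ j ^ (±1)` lie in the
  -- domain where `P` contracts
  have hB : ∀ c, ℝ ∙ v j c ∈ awayFrom (W (L.getLastD a).1 (L.getLastD a).2) ε := fun c => by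
    have := hS.six_mul_le_projDelta j c (L.getLastD a).1 (L.getLastD a).2
      fun h => hj (congrArg Prod.fst h).symm
    exact ⟨hS.finrank_span j c, by linarith⟩
  have hlip := hS.projDist_prod_smul_le hε L a hred (hB true) (hB false)
  have hsep := hS.two_mul_le_projDist hε j
  have hfin : ∀ c, Module.finrank ℝ ↥(P • (ℝ ∙ v j c)) = 1 := fun c =>
    (finrank_units_smul _ _).trans (hS.finrank_span j c)
  have htri₁ := projDist_triangle (hS.finrank_span j true) (hfin true) (hS.finrank_span j false)
  have htri₂ := projDist_triangle (hfin true) (hfin false) (hS.finrank_span j false)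
  by_contra! hmove
  have h1 := hmove _ (hS.finrank_span j true)
  have h2 := hmove _ (hS.finrank_span j false)
  rw [projDist_comm] at h1
  have : (1 - ε) * (2 * ε) ≤ (1 - ε) * projDist (ℝ ∙ v j true) (ℝ ∙ v j false) := by
    gcongr; linarith [hS.le_one_third j]
  linarith

lemma le_norm_lift_sub_one [FiniteDimensional ℝ V] [Nontrivial ι] (hS : IsSchottky ε γ α v W)
    (hε : 0 < ε) {w : FreeGroup ι} (hw : w ≠ 1) :
    ε * (1 - ε) / 2 ≤ ‖(lift γ w : V →L[ℝ] V) - 1‖ := by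
  classical
  obtain ⟨a, L, hL⟩ := List.exists_cons_of_ne_nil (mt toWord_eq_nil_iff.mp hw)
  have hlift : lift γ w = ((a :: L).map (letter γ)).prod := by
    rw [← mk_toWord (x := w), hL, lift_mk]
    rfl
  obtain ⟨x, hx, hmove⟩ := hS.exists_le_projDist_prod_smul hε (hL ▸ isReduced_toWord)
  rw [← hlift] at hmove
  by_contra! hlt
  have : projDist (lift γ w • x) x ≤ 2 * ‖(lift γ w : V →L[ℝ] V) - 1‖ :=
    projDist_map_self_le (hlt.trans (by nlinarith [hS.le_one_third a.1])) hx
  linarith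

end IsSchottky

lemma Subgroup.discreteTopology_of_le_norm_sub_one {R : Type*} [NormedRing R] {H : Subgroup Rˣ}
    {d : ℝ} (hd : 0 < d) (h : ∀ u ∈ H, u ≠ 1 → d ≤ ‖(u : R) - 1‖) : DiscreteTopology H := by
  apply discreteTopology_of_isOpen_singleton_one
  have : ({1} : Set H) = (fun u : H => ((u : Rˣ) : R)) ⁻¹' Metric.ball 1 d := by
    ext u
    simp only [Set.mem_singleton_iff, Set.mem_preimage, Metric.mem_ball, dist_eq_norm]
    refine ⟨by rintro rfl; simpa using hd, fun hu => ?_⟩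
    by_contra hne
    exact (h u u.2 fun h1 => hne (Subtype.ext h1)).not_gt hu
  rw [this]
  exact Metric.isOpen_ball.preimage (Units.continuous_val.comp continuous_subtype_val)

/-- Remark 6.5: a group generated by `γ₁, …, γ_t` (`t ≥ 2`) that is `ε`-Schottky on
`ℙ(V)` — each `h ∈ E = {γᵢ^{±1}}` is `ε`-proximal with attracting line `span (v i b)` and
repelling hyperplane `W i b` (`b = true` for `γᵢ`, `b = false` for `γᵢ⁻¹`), and
`δ(x_h⁺, X_{h'}^<) ≥ 6ε` whenever `h' ≠ h⁻¹` — is free on `γ₁, …, γ_t` and discrete in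
`GL(V)`. -/
theorem stmt_18 [FiniteDimensional ℝ V] (t : ℕ) (ht : 2 ≤ t) (ε : ℝ) (hε : 0 < ε)
    (γ : Fin t → (V →L[ℝ] V)ˣ)
    (α : Fin t → Bool → ℝ) (v : Fin t → Bool → V) (W : Fin t → Bool → Submodule ℝ V)
    (hprox : ∀ i b, IsEpsProximalWith
      (cond b (↑(γ i) : V →L[ℝ] V) (↑(γ i)⁻¹ : V →L[ℝ] V)) ε (α i b) (v i b) (W i b))
    (hsep : ∀ (i : Fin t) (b : Bool) (j : Fin t) (c : Bool), (j, c) ≠ (i, !b) →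
      6 * ε ≤ projDelta (Submodule.span ℝ {v i b}) (W j c)) :
    Function.Injective (FreeGroup.lift γ : FreeGroup (Fin t) →* (V →L[ℝ] V)ˣ) ∧
    DiscreteTopology (Subgroup.closure (Set.range γ) : Subgroup (V →L[ℝ] V)ˣ) := by
  have hS : IsSchottky ε γ α v W := ⟨hprox, hsep⟩
  have : Nontrivial (Fin t) := Fin.nontrivial_iff_two_le.mpr ht
  have hd : 0 < ε * (1 - ε) / 2 := by
    have := hS.le_one_third ⟨0, by omega⟩
    nlinarith
  refine ⟨(injective_iff_map_eq_one _).mpr fun w hw => ?_, ?_⟩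
  · by_contra hne
    have := hS.le_norm_lift_sub_one hε hne
    rw [hw, Units.val_one, sub_self, norm_zero] at this
    linarith
  · refine Subgroup.discreteTopology_of_le_norm_sub_one hd fun u hu hu1 => ?_
    obtain ⟨w, rfl⟩ := (range_lift_eq_closure (f := γ)).symm ▸ hu
    exact hS.le_norm_lift_sub_one hε fun hw => hu1 (hw ▸ map_one _)
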